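/- Let β_SH, σ_SH > 0 and d_1, d_r, d_{1r} > 0, and set ρ = e^{−d_1/β_SH}. Let Σ be the 2×2 matrix with diagonal entries σ_SH² and off-diagonal entries σ_SH²·e^{−d_{1r}/β_SH}, and let c = (σ_SH²·e^{−d_1/β_SH}, σ_SH²·e^{−d_r/β_SH}). Then the conditional variance σ² := σ_SH² − cᵀ·Σ⁻¹·c satisfies σ²/σ_SH² = 1 − (e^{−2d_1/β_SH} + e^{−2d_r/β_SH} − 2e^{−(d_1+d_r+d_{1r})/β_SH})/(1 − e^{−2d_{1r}/β_SH}); moreover, with σ̂² = σ_SH²(1 − ρ²) and σ_Δm² = σ_SH²·(e^{−d_r/β_SH} − e^{−(d_1+d_{1r})/β_SH})²/(1 − e^{−2d_{1r}/β_SH}), one has the identity σ̂² − σ² = σ_Δm². -/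

import Mathlib

open Real Matrix

/-!
Writing `s = σ_SH²`, `a = e^{-d₁/β}`, `b = e^{-d_r/β}`, `r = e^{-d_{1r}/β}`, every quantity is a
rational function of `s, a, b, r`: the adjugate formula gives
`Σ⁻¹ = (s²(1 - r²))⁻¹ [[s, -sr], [-sr, s]]`, so `cᵀ Σ⁻¹ c = s (a² + b² - 2abr) / (1 - r²)`, and
`σ̂² - σ² = s (b - ar)² / (1 - r²)` is a polynomial identity after clearing `1 - r²`, which is
nonzero because `0 < r < 1`.
-/

theorem inv_scaled_corr_fin_two (s r : ℝ) :
    !![s, s * r; s * r, s]⁻¹ = (s ^ 2 * (1 - r ^ 2))⁻¹ • !![s, -(s * r); -(s * r), s] := by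
  rw [inv_def, adjugate_fin_two_of, det_fin_two_of, Ring.inverse_eq_inv']
  congr 2
  ring

theorem dotProduct_inv_scaled_corr_mulVec {s r a b : ℝ} (hs : s ≠ 0) (hr : 1 - r ^ 2 ≠ 0) :
    ![s * a, s * b] ⬝ᵥ (!![s, s * r; s * r, s]⁻¹ *ᵥ ![s * a, s * b]) =
      s * (a ^ 2 + b ^ 2 - 2 * a * b * r) / (1 - r ^ 2) := by
  rw [inv_scaled_corr_fin_two, smul_mulVec, dotProduct_smul, mulVec_fin_two, vec2_dotProduct',
    smul_eq_mul]
  simp only [of_apply, cons_val', cons_val_zero, cons_val_one, empty_val', cons_val_fin_one]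
  field_simp
  ring

theorem markov_variance_sub_conditional_variance {s r a b : ℝ} (hr : 1 - r ^ 2 ≠ 0) :
    s * (1 - a ^ 2) - (s - s * (a ^ 2 + b ^ 2 - 2 * a * b * r) / (1 - r ^ 2)) =
      s * (b - a * r) ^ 2 / (1 - r ^ 2) := by
  field_simp
  ring

theorem exp_neg_two_mul_div (d β : ℝ) : exp (-2 * d / β) = exp (-d / β) ^ 2 := by
  rw [← exp_nat_mul]
  ring_nf

theorem exp_neg_add_div (x y β : ℝ) : exp (-(x + y) / β) = exp (-x / β) * exp (-y / β) := by
  rw [← exp_add]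
  ring_nf

theorem one_sub_exp_neg_div_sq_ne_zero {d β : ℝ} (hd : 0 < d) (hβ : 0 < β) :
    1 - exp (-d / β) ^ 2 ≠ 0 := by
  have hlt : exp (-d / β) < 1 := exp_lt_one_iff.mpr (div_neg_of_neg_of_pos (neg_neg_of_pos hd) hβ)
  nlinarith [exp_pos (-d / β)]

theorem stmt_12_general (βSH σSH d1 dr d1r : ℝ)
    (hβ : 0 < βSH) (hσ : 0 < σSH) (hd1r : 0 < d1r)
    (ρ : ℝ) (hρ : ρ = Real.exp (-d1 / βSH))
    (Sig : Matrix (Fin 2) (Fin 2) ℝ)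
    (hSig : Sig = !![σSH ^ 2, σSH ^ 2 * Real.exp (-d1r / βSH);
                     σSH ^ 2 * Real.exp (-d1r / βSH), σSH ^ 2])
    (c : Fin 2 → ℝ)
    (hc : c = ![σSH ^ 2 * Real.exp (-d1 / βSH), σSH ^ 2 * Real.exp (-dr / βSH)])
    (σ2 : ℝ) (hσ2 : σ2 = σSH ^ 2 - c ⬝ᵥ Sig⁻¹.mulVec c)
    (σhat2 : ℝ) (hσhat2 : σhat2 = σSH ^ 2 * (1 - ρ ^ 2))
    (σΔm2 : ℝ)
    (hσΔm2 : σΔm2 =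
      σSH ^ 2 * (Real.exp (-dr / βSH) - Real.exp (-(d1 + d1r) / βSH)) ^ 2 /
        (1 - Real.exp (-2 * d1r / βSH))) :
    σ2 / σSH ^ 2 =
      1 - (Real.exp (-2 * d1 / βSH) + Real.exp (-2 * dr / βSH) -
            2 * Real.exp (-(d1 + dr + d1r) / βSH)) /
          (1 - Real.exp (-2 * d1r / βSH)) ∧
    σhat2 - σ2 = σΔm2 := by
  have hs : σSH ^ 2 ≠ 0 := by positivity
  have hr := one_sub_exp_neg_div_sq_ne_zero hd1r hβ
  subst hSig hc hσ2 hσhat2 hσΔm2 hρ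
  rw [dotProduct_inv_scaled_corr_mulVec hs hr]
  simp only [exp_neg_two_mul_div, exp_neg_add_div]
  refine ⟨?_, markov_variance_sub_conditional_variance hr⟩
  field_simp

/-- In the three-point analysis, the conditional variance
`σ² = σ_SH² − cᵀ Σ⁻¹ c` satisfies the stated closed form, and
`σ̂² − σ² = σ_Δm²` where `σ̂² = σ_SH²(1 − ρ²)` is the variance of the Markov
approximation and `σ_Δm²` the variance of the difference of conditional means. -/
theorem stmt_12 (βSH σSH d1 dr d1r : ℝ)
    (hβ : 0 < βSH) (hσ : 0 < σSH) (hd1 : 0 < d1) (hdr : 0 < dr) (hd1r : 0 < d1r)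
    (ρ : ℝ) (hρ : ρ = Real.exp (-d1 / βSH))
    (Sig : Matrix (Fin 2) (Fin 2) ℝ)
    (hSig : Sig = !![σSH ^ 2, σSH ^ 2 * Real.exp (-d1r / βSH);
                     σSH ^ 2 * Real.exp (-d1r / βSH), σSH ^ 2])
    (c : Fin 2 → ℝ)
    (hc : c = ![σSH ^ 2 * Real.exp (-d1 / βSH), σSH ^ 2 * Real.exp (-dr / βSH)])
    (σ2 : ℝ) (hσ2 : σ2 = σSH ^ 2 - c ⬝ᵥ Sig⁻¹.mulVec c)
    (σhat2 : ℝ) (hσhat2 : σhat2 = σSH ^ 2 * (1 - ρ ^ 2))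
    (σΔm2 : ℝ)
    (hσΔm2 : σΔm2 =
      σSH ^ 2 * (Real.exp (-dr / βSH) - Real.exp (-(d1 + d1r) / βSH)) ^ 2 /
        (1 - Real.exp (-2 * d1r / βSH))) :
    σ2 / σSH ^ 2 =
      1 - (Real.exp (-2 * d1 / βSH) + Real.exp (-2 * dr / βSH) -
            2 * Real.exp (-(d1 + dr + d1r) / βSH)) /
          (1 - Real.exp (-2 * d1r / βSH)) ∧
    σhat2 - σ2 = σΔm2 :=
  stmt_12_general βSH σSH d1 dr d1r hβ hσ hd1r ρ hρ Sig hSig c hc σ2 hσ2 σhat2 hσhat2 σΔm2 hσΔm2
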